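/- arXiv:math/0309135 — 2 statements merged into one kernel-verified Lean document; each statement's English description precedes it below -/
import Mathlib

section
/- Let n ≥ 1 and let π be a permutation of {1, …, n+1}. For every j ∈ {1, …, n}, the number of i ∈ {1, …, n} such that (i,j) is a box for π is odd (in particular it is at least 1). -/
/-- `(i,j)` is a box for the permutation `π` with inverse `σ`:
`min(π i, π (i+1)) ≤ j < max(π i, π (i+1))` and `min(σ j, σ (j+1)) ≤ i < max(σ j, σ (j+1))`. -/
def IsBox (π σ : ℕ → ℕ) (i j : ℕ) : Prop :=
  min (π i) (π (i+1)) ≤ j ∧ j < max (π i) (π (i+1)) ∧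
  min (σ j) (σ (j+1)) ≤ i ∧ i < max (σ j) (σ (j+1))

instance (π σ : ℕ → ℕ) (i j : ℕ) : Decidable (IsBox π σ i j) := by
  unfold IsBox; infer_instance

/-- A box `(i,j)` is windmilled if exactly one of `π i > j` and `σ j > i` holds. -/
def Windmilled (π σ : ℕ → ℕ) (i j : ℕ) : Prop :=
  IsBox π σ i j ∧ Xor' (j < π i) (i < σ j)

instance (π σ : ℕ → ℕ) (i j : ℕ) : Decidable (Windmilled π σ i j) := by
  unfold Windmilled Xor'; infer_instance

/-- The matrix `A(π)`: `-1` on windmilled boxes, `1` on non-windmilled boxes, `0` elsewhere. -/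
def AMat (π σ : ℕ → ℕ) (i j : ℕ) : ℤ :=
  if Windmilled π σ i j then -1 else if IsBox π σ i j then 1 else 0

/-- Baxter condition (dividing-line form) for a permutation `π` of `{1, …, n+1}`
with inverse `σ`. -/
def IsBaxter (n : ℕ) (π σ : ℕ → ℕ) : Prop :=
  ∀ i ∈ Finset.Icc 1 n,
    ∃ c, min (π i) (π (i+1)) ≤ c ∧ c < max (π i) (π (i+1)) ∧
      ∀ d, min (π i) (π (i+1)) < d → d < max (π i) (π (i+1)) →
        (π i < π (i+1) → (d ≤ c → σ d < i) ∧ (c < d → σ d > i + 1)) ∧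
        (π (i+1) < π i → (d ≤ c → σ d > i + 1) ∧ (c < d → σ d < i))

/-!
Fix `j` and let `a < b` be the positions `σ j`, `σ (j+1)` in increasing order. A box `(i, j)` is
exactly an `i ∈ [a, b)` at which the predicate `π i ≤ j` changes value between `i` and `i + 1`.
That predicate holds at `σ j` and fails at `σ (j+1)`, so along `[a, b)` it changes value an odd
number of times.
-/

open Finset

theorem min_le_and_lt_max_iff {α : Type*} [LinearOrder α] {x y j : α} :
    (min x y ≤ j ∧ j < max x y) ↔ ¬(x ≤ j ↔ y ≤ j) := by
  rw [min_le_iff, lt_max_iff, ← not_le, ← not_le]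
  tauto

theorem Nat.odd_card_filter_Ico_not_iff_succ (p : ℕ → Prop) [DecidablePred p] {a b : ℕ}
    (hab : a ≤ b) : Odd #{i ∈ Ico a b | ¬(p i ↔ p (i + 1))} ↔ ¬(p a ↔ p b) := by
  induction b, hab using Nat.le_induction with
  | base => simp
  | succ m ham ih =>
    rw [← insert_Ico_right_eq_Ico_add_one ham, filter_insert]
    split_ifs with h
    · rw [ih]
      tauto
    · rw [card_insert_of_notMem (by simp), Nat.odd_add_one, ih]
      tauto

theorem Equiv.Perm.symm_apply_mem_of_forall_mem {α : Type*} (π : Equiv.Perm α) {s : Finset α}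
    (h : ∀ k ∈ s, π k ∈ s) {k : α} (hk : k ∈ s) : π.symm k ∈ s := by
  obtain ⟨m, hm, rfl⟩ := surjOn_of_injOn_of_card_le π h π.injective.injOn le_rfl hk
  simpa using hm

theorem isBox_iff {π σ : ℕ → ℕ} {i j : ℕ} :
    IsBox π σ i j ↔
      ¬(π i ≤ j ↔ π (i + 1) ≤ j) ∧ i ∈ Ico (min (σ j) (σ (j + 1))) (max (σ j) (σ (j + 1))) := by
  rw [IsBox, mem_Ico, ← and_assoc, min_le_and_lt_max_iff]

theorem stmt3_general (n : ℕ) (π : Equiv.Perm ℕ)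
    (hπ : ∀ k ∈ Finset.Icc 1 (n+1), π k ∈ Finset.Icc 1 (n+1))
    (j : ℕ) (hj : j ∈ Finset.Icc 1 n) :
    Odd ((Finset.Icc 1 n).filter (fun i => IsBox (⇑π) (⇑π.symm) i j)).card ∧
    1 ≤ ((Finset.Icc 1 n).filter (fun i => IsBox (⇑π) (⇑π.symm) i j)).card := by
  rw [mem_Icc] at hj
  have hσ (k : ℕ) (hk : 1 ≤ k ∧ k ≤ n + 1) : 1 ≤ π.symm k ∧ π.symm k ≤ n + 1 :=
    mem_Icc.mp <| π.symm_apply_mem_of_forall_mem hπ (mem_Icc.mpr hk)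
  have hσj := hσ j (by omega)
  have hσj' := hσ (j + 1) (by omega)
  set p : ℕ → Prop := fun i => π i ≤ j
  set a := min (π.symm j) (π.symm (j + 1)) with ha
  set b := max (π.symm j) (π.symm (j + 1)) with hb
  have boxes : {i ∈ Icc 1 n | IsBox π π.symm i j} = {i ∈ Ico a b | ¬(p i ↔ p (i + 1))} := by
    ext i
    simp only [mem_filter, isBox_iff, mem_Icc, mem_Ico]
    constructor
    · rintro ⟨-, hcross, hi⟩
      exact ⟨hi, hcross⟩
    · rintro ⟨hi, hcross⟩
      exact ⟨by omega, hcross, hi⟩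
  have hends : ¬(p a ↔ p b) := by
    rcases le_total (π.symm j) (π.symm (j + 1)) with h | h <;> simp [p, ha, hb, h]
  have hodd := (Nat.odd_card_filter_Ico_not_iff_succ p min_le_max).mpr hends
  rw [boxes]
  exact ⟨hodd, hodd.pos⟩

theorem stmt3 (n : ℕ) (hn : 1 ≤ n) (π : Equiv.Perm ℕ)
    (hπ : ∀ k ∈ Finset.Icc 1 (n+1), π k ∈ Finset.Icc 1 (n+1))
    (j : ℕ) (hj : j ∈ Finset.Icc 1 n) :
    Odd ((Finset.Icc 1 n).filter (fun i => IsBox (⇑π) (⇑π.symm) i j)).card ∧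
    1 ≤ ((Finset.Icc 1 n).filter (fun i => IsBox (⇑π) (⇑π.symm) i j)).card :=
  stmt3_general n π hπ j hj
end

section
/- Let n ≥ 1 and let π be a permutation of {1, …, n+1}. Then π is Baxter if and only if there is no pair (i,j) with 1 ≤ i, j ≤ n that is a windmilled box for π; equivalently, π is Baxter if and only if the matrix A(π) contains no entry equal to −1. -/
/-!
At an ascent `π i < π (i+1)` put `R d := i < σ d`, at a descent `R d := σ d ≤ i`. A value `d`
strictly between `π i` and `π (i+1)` has `σ d ∉ {i, i+1}`, so the Baxter condition at `i` says
that `R` switches from false to true at a single cut of that interval, i.e. never drops from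
true to false at consecutive values `j, j+1`. Such a drop is exactly a windmilled box `(i, j)`.
-/

def IsBaxterAt (π σ : ℕ → ℕ) (i : ℕ) : Prop :=
  ∃ c, min (π i) (π (i+1)) ≤ c ∧ c < max (π i) (π (i+1)) ∧
    ∀ d, min (π i) (π (i+1)) < d → d < max (π i) (π (i+1)) →
      (π i < π (i+1) → (d ≤ c → σ d < i) ∧ (c < d → σ d > i + 1)) ∧
      (π (i+1) < π i → (d ≤ c → σ d > i + 1) ∧ (c < d → σ d < i))

theorem isBaxter_iff_forall_isBaxterAt {n : ℕ} {π σ : ℕ → ℕ} :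
    IsBaxter n π σ ↔ ∀ i ∈ Finset.Icc 1 n, IsBaxterAt π σ i :=
  Iff.rfl

theorem exists_threshold_iff {a b : ℕ} (hab : a < b) (R : ℕ → Prop) :
    (∃ c, a ≤ c ∧ c < b ∧ ∀ d, a < d → d < b → (d ≤ c → ¬ R d) ∧ (c < d → R d)) ↔
      ∀ d, a < d → d + 1 < b → R d → R (d + 1) := by
  constructor
  · rintro ⟨c, -, -, hc⟩ d hd hdb hR
    have hcd : c < d := by
      by_contra! hdc
      exact (hc d hd (by omega)).1 hdc hR
    exact (hc (d + 1) (by omega) hdb).2 (by omega)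
  · intro mono
    have up : ∀ d e, a < d → d ≤ e → e < b → R d → R e := by
      intro d e hd hde heb hR
      induction e, hde using Nat.le_induction with
      | base => exact hR
      | succ e hde ih => exact mono e (by omega) heb (ih (by omega))
    classical
    by_cases H : ∃ d, a < d ∧ d < b ∧ R d
    · obtain ⟨hd₀a, hd₀b, hRd₀⟩ := Nat.find_spec H
      refine ⟨Nat.find H - 1, by omega, by omega, fun d hda hdb => ⟨fun hdc hRd => ?_, fun hcd => ?_⟩⟩
      · exact Nat.find_min H (show d < Nat.find H by omega) ⟨hda, hdb, hRd⟩
      · exact up _ d hd₀a (by omega) hdb hRd₀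
    · simp only [not_exists, not_and] at H
      exact ⟨b - 1, by omega, by omega, fun d hda hdb => ⟨fun _ => H d hda hdb, by omega⟩⟩

section Windmill

variable {π σ : ℕ → ℕ} {i j : ℕ}

theorem windmilled_iff : Windmilled π σ i j ↔ IsBox π σ i j ∧ Xor (j < π i) (i < σ j) :=
  Iff.rfl

theorem windmilled_iff_of_lt (h : π i < π (i+1)) :
    Windmilled π σ i j ↔ π i ≤ j ∧ j < π (i+1) ∧ σ (j+1) ≤ i ∧ i < σ j := by
  simp only [windmilled_iff, IsBox, Xor, min_eq_left h.le, max_eq_right h.le]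
  omega

theorem windmilled_iff_of_gt (h : π (i+1) < π i) :
    Windmilled π σ i j ↔ π (i+1) ≤ j ∧ j < π i ∧ σ j ≤ i ∧ i < σ (j+1) := by
  simp only [windmilled_iff, IsBox, Xor, min_eq_right h.le, max_eq_left h.le]
  omega

theorem Windmilled.mem_Icc {n : ℕ} (hw : Windmilled π σ i j)
    (hi : π i ∈ Finset.Icc 1 (n+1)) (hi' : π (i+1) ∈ Finset.Icc 1 (n+1)) :
    j ∈ Finset.Icc 1 n := by
  obtain ⟨⟨hmin, hmax, -⟩, -⟩ := hw
  simp only [Finset.mem_Icc] at hi hi' ⊢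
  omega

theorem aMat_eq_neg_one_iff : AMat π σ i j = -1 ↔ Windmilled π σ i j := by
  unfold AMat
  split_ifs with hw hb <;> simp [hw]

end Windmill

section Permutation

variable (π : Equiv.Perm ℕ) {i : ℕ}

theorem isBaxterAt_iff_of_lt (h : π i < π (i+1)) :
    IsBaxterAt π π.symm i ↔ ∃ c, π i ≤ c ∧ c < π (i+1) ∧
      ∀ d, π i < d → d < π (i+1) → (d ≤ c → ¬ i < π.symm d) ∧ (c < d → i < π.symm d) := by
  simp only [IsBaxterAt, min_eq_left h.le, max_eq_right h.le]
  refine exists_congr fun c => and_congr_right' <| and_congr_right' <|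
    forall_congr' fun d => forall_congr' fun hd => forall_congr' fun hd' => ?_
  have hdi : π.symm d ≠ i := by rw [Ne, Equiv.symm_apply_eq]; omega
  have hdi' : π.symm d ≠ i + 1 := by rw [Ne, Equiv.symm_apply_eq]; omega
  omega

theorem isBaxterAt_iff_of_gt (h : π (i+1) < π i) :
    IsBaxterAt π π.symm i ↔ ∃ c, π (i+1) ≤ c ∧ c < π i ∧
      ∀ d, π (i+1) < d → d < π i → (d ≤ c → ¬ π.symm d ≤ i) ∧ (c < d → π.symm d ≤ i) := by
  simp only [IsBaxterAt, min_eq_right h.le, max_eq_left h.le]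
  refine exists_congr fun c => and_congr_right' <| and_congr_right' <|
    forall_congr' fun d => forall_congr' fun hd => forall_congr' fun hd' => ?_
  have hdi : π.symm d ≠ i := by rw [Ne, Equiv.symm_apply_eq]; omega
  have hdi' : π.symm d ≠ i + 1 := by rw [Ne, Equiv.symm_apply_eq]; omega
  omega

theorem forall_not_windmilled_iff_of_lt (h : π i < π (i+1)) :
    (∀ j, ¬ Windmilled π π.symm i j) ↔
      ∀ d, π i < d → d + 1 < π (i+1) → i < π.symm d → i < π.symm (d + 1) := by
  simp only [windmilled_iff_of_lt h]
  refine ⟨fun H d hd hd' hR => ?_, fun H j ⟨hj, hj', hR', hR⟩ => ?_⟩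
  · by_contra hR'
    exact H d ⟨hd.le, by omega, by omega, hR⟩
  · obtain rfl | hj := hj.eq_or_lt
    · simp at hR
    obtain hj' | hj' := Nat.lt_iff_add_one_le.mp hj' |>.eq_or_lt
    · rw [hj', Equiv.symm_apply_apply] at hR'
      omega
    · exact absurd (H j hj hj' hR) (by omega)

theorem forall_not_windmilled_iff_of_gt (h : π (i+1) < π i) :
    (∀ j, ¬ Windmilled π π.symm i j) ↔
      ∀ d, π (i+1) < d → d + 1 < π i → π.symm d ≤ i → π.symm (d + 1) ≤ i := by
  simp only [windmilled_iff_of_gt h]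
  refine ⟨fun H d hd hd' hR => ?_, fun H j ⟨hj, hj', hR, hR'⟩ => ?_⟩
  · by_contra hR'
    exact H d ⟨hd.le, by omega, hR, by omega⟩
  · obtain rfl | hj := hj.eq_or_lt
    · simp at hR
    obtain hj' | hj' := Nat.lt_iff_add_one_le.mp hj' |>.eq_or_lt
    · rw [hj', Equiv.symm_apply_apply] at hR'
      omega
    · exact absurd (H j hj hj' hR) (by omega)

theorem isBaxterAt_iff_forall_not_windmilled :
    IsBaxterAt π π.symm i ↔ ∀ j, ¬ Windmilled π π.symm i j := by
  rcases lt_trichotomy (π i) (π (i+1)) with h | h | h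
  · rw [isBaxterAt_iff_of_lt π h, forall_not_windmilled_iff_of_lt π h, exists_threshold_iff h]
  · exact absurd (π.injective h) (by omega)
  · rw [isBaxterAt_iff_of_gt π h, forall_not_windmilled_iff_of_gt π h, exists_threshold_iff h]

end Permutation

theorem stmt12_general (n : ℕ) (π : Equiv.Perm ℕ)
    (hπ : ∀ k ∈ Finset.Icc 1 (n+1), π k ∈ Finset.Icc 1 (n+1)) :
    (IsBaxter n (⇑π) (⇑π.symm) ↔
      ¬ ∃ i ∈ Finset.Icc 1 n, ∃ j ∈ Finset.Icc 1 n, Windmilled (⇑π) (⇑π.symm) i j) ∧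
    (IsBaxter n (⇑π) (⇑π.symm) ↔
      ¬ ∃ i ∈ Finset.Icc 1 n, ∃ j ∈ Finset.Icc 1 n, AMat (⇑π) (⇑π.symm) i j = -1) := by
  have key : IsBaxter n π π.symm ↔
      ¬ ∃ i ∈ Finset.Icc 1 n, ∃ j ∈ Finset.Icc 1 n, Windmilled π π.symm i j := by
    simp only [isBaxter_iff_forall_isBaxterAt, isBaxterAt_iff_forall_not_windmilled, not_exists,
      not_and]
    refine forall₂_congr fun i hi => ⟨fun H j _ => H j, fun H j hw => H j ?_ hw⟩
    simp only [Finset.mem_Icc] at hi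
    exact hw.mem_Icc (hπ i (by simp only [Finset.mem_Icc]; omega))
      (hπ (i+1) (by simp only [Finset.mem_Icc]; omega))
  simpa only [aMat_eq_neg_one_iff] using ⟨key, key⟩

theorem stmt12 (n : ℕ) (hn : 1 ≤ n) (π : Equiv.Perm ℕ)
    (hπ : ∀ k ∈ Finset.Icc 1 (n+1), π k ∈ Finset.Icc 1 (n+1)) :
    (IsBaxter n (⇑π) (⇑π.symm) ↔
      ¬ ∃ i ∈ Finset.Icc 1 n, ∃ j ∈ Finset.Icc 1 n, Windmilled (⇑π) (⇑π.symm) i j) ∧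
    (IsBaxter n (⇑π) (⇑π.symm) ↔
      ¬ ∃ i ∈ Finset.Icc 1 n, ∃ j ∈ Finset.Icc 1 n, AMat (⇑π) (⇑π.symm) i j = -1) :=
  stmt12_general n π hπ
end
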